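/- Let Σ be a finite alphabet with |Σ| = σ and let w ∈ Σ^n. Then the number of parameterized-equivalence classes represented among the fragments of w that are parameterized squares is at most 2·σ!·n, and the number of distinct words that occur as fragments of w and are parameterized squares is at most 2·(σ!)²·n. -/

import Mathlib

/-- Words `u` and `v` are parameterized-equivalent if `|u| = |v|` and there is a bijection
`f : Alph(u) → Alph(v)` with `v[i] = f(u[i])` for all `i`; equivalently, `v = u.map f` for
some function `f` injective on the set of letters of `u`. -/
def ParamEquiv {α : Type*} (u v : List α) : Prop :=
  ∃ f : α → α, Set.InjOn f {a | a ∈ u} ∧ v = u.map f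

/-- A (nonempty) parameterized square is a word `u ++ v` with `|u| = |v| ≥ 1` and `u`, `v`
parameterized-equivalent. -/
def IsParamSquare {α : Type*} (s : List α) : Prop :=
  ∃ u v : List α, s = u ++ v ∧ 1 ≤ u.length ∧ u.length = v.length ∧ ParamEquiv u v

/-!
Pick, for every class of parameterized squares occurring in `w`, its rightmost occurrence: a
position `i`, a half-length `m` and a permutation `π` of the alphabet mapping the first half to
the second. At most two classes share the same pair `(i, π)`. Indeed, take three such squares
with half-lengths `m₁ < m₂ < m₃`. If `2 m₁ ≤ m₃`, the `π`-image of the shortest one occurs again at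
`i + m₃`. Otherwise the suffix of `w` starting at `i + m₂` has period `m₂ - m₁` on a window of
length `m₁ ≥ (m₂ - m₁) + (m₃ - m₂)` and period `m₃ - m₂` on a longer one, so it has period
`m₂ - m₁` throughout, and the shortest square occurs verbatim at `i + (m₂ - m₁)`. Either way its
occurrence at `i` was not the rightmost one. Hence there are at most `2 · σ! · n` classes, and
each class contains at most `σ!` words.
-/

open Finset Function

section

variable {α β : Type*}

theorem Set.InjOn.exists_perm_extend [Finite α] {s : Set α} {f : α → α} (hf : s.InjOn f) :
    ∃ π : Equiv.Perm α, ∀ a ∈ s, π a = f a := by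
  have := Fintype.ofFinite α
  obtain ⟨g, hg⟩ := Set.MapsTo.exists_equiv_extend_of_card_eq (t := Finset.univ)
    Finset.card_univ.symm (fun a _ ↦ by simp) hf
  exact ⟨g.trans (Equiv.subtypeUnivEquiv Finset.mem_univ), hg⟩

namespace ParamEquiv

theorem refl (u : List α) : ParamEquiv u u :=
  ⟨id, Set.injOn_id _, u.map_id.symm⟩

theorem trans {u v t : List α} (huv : ParamEquiv u v) (hvt : ParamEquiv v t) :
    ParamEquiv u t := by
  obtain ⟨f, hf, rfl⟩ := huv
  obtain ⟨g, hg, rfl⟩ := hvt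
  exact ⟨g ∘ f, fun x hx y hy h ↦ hf hx hy (hg (List.mem_map_of_mem hx)
    (List.mem_map_of_mem hy) h), List.map_map⟩

theorem length_eq {u v : List α} (h : ParamEquiv u v) : u.length = v.length := by
  obtain ⟨f, -, rfl⟩ := h
  exact (u.length_map f).symm

theorem of_perm (u : List α) (π : Equiv.Perm α) : ParamEquiv u (u.map π) :=
  ⟨π, π.injective.injOn, rfl⟩

theorem exists_perm [Finite α] {u v : List α} (h : ParamEquiv u v) :
    ∃ π : Equiv.Perm α, v = u.map π := by
  obtain ⟨f, hf, rfl⟩ := h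
  obtain ⟨π, hπ⟩ := hf.exists_perm_extend
  exact ⟨π, List.map_congr_left fun a ha ↦ (hπ a ha).symm⟩

end ParamEquiv

theorem isParamSquare_iff [Finite α] {s : List α} :
    IsParamSquare s ↔ ∃ (u : List α) (π : Equiv.Perm α), u ≠ [] ∧ s = u ++ u.map π := by
  constructor
  · rintro ⟨u, v, rfl, hu, -, huv⟩
    obtain ⟨π, rfl⟩ := huv.exists_perm
    exact ⟨u, π, List.ne_nil_of_length_pos hu, rfl⟩
  · rintro ⟨u, π, hu, rfl⟩
    exact ⟨u, u.map π, rfl, List.length_pos_of_ne_nil hu, (u.length_map π).symm,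
      ParamEquiv.of_perm u π⟩

theorem IsParamSquare.length_pos {s : List α} (hs : IsParamSquare s) : 0 < s.length := by
  obtain ⟨u, v, rfl, hu, -⟩ := hs
  simp only [List.length_append]
  omega

theorem IsParamSquare.of_paramEquiv [Finite α] {s t : List α} (hs : IsParamSquare s)
    (hst : ParamEquiv s t) : IsParamSquare t := by
  obtain ⟨u, σ, hu, rfl⟩ := isParamSquare_iff.1 hs
  obtain ⟨π, rfl⟩ := hst.exists_perm
  refine isParamSquare_iff.2 ⟨u.map π, π.symm.trans (σ.trans π), by simpa using hu, ?_⟩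
  simp [List.map_map, comp_def]

def PeriodicBelow (f : ℕ → β) (p L : ℕ) : Prop :=
  ∀ t, t + p < L → f t = f (t + p)

theorem PeriodicBelow.extend {f : ℕ → β} {p q L M : ℕ} (hq : PeriodicBelow f q M)
    (hp : PeriodicBelow f p L) (hq₀ : 0 < q) (hpq : p + q ≤ L) : PeriodicBelow f p M := by
  intro t
  induction t using Nat.strong_induction_on with
  | _ t ih =>
    intro ht
    by_cases htL : t + p < L
    · exact hp t htL
    obtain ⟨s, rfl⟩ : ∃ s, t = s + q := ⟨t - q, by omega⟩
    calc f (s + q) = f s := (hq s (by omega)).symm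
      _ = f (s + p) := ih s (by omega) (by omega)
      _ = f (s + q + p) := by rw [hq (s + p) (by omega)]; ring_nf

theorem shift_eq_of_three_squares {X : ℕ → β} {π : β → β} (hπ : Injective π) {m₁ m₂ m₃ : ℕ}
    (h₁₂ : m₁ < m₂) (h₂₃ : m₂ < m₃) (h₃₁ : m₃ ≤ 2 * m₁)
    (h₁ : ∀ k < m₁, X (m₁ + k) = π (X k)) (h₂ : ∀ k < m₂, X (m₂ + k) = π (X k))
    (h₃ : ∀ k < m₃, X (m₃ + k) = π (X k)) (t : ℕ) (ht : t < 2 * m₁) :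
    X (t + (m₂ - m₁)) = X t := by
  set Z : ℕ → β := fun k ↦ X (m₂ + k)
  have hZp : PeriodicBelow Z (m₂ - m₁) m₁ := fun k hk ↦ by
    simp only [Z]
    rw [show m₂ + k = m₁ + (k + (m₂ - m₁)) by omega, h₁ _ hk, ← h₂ _ (by omega)]
  have hZq : PeriodicBelow Z (m₃ - m₂) m₃ := fun k hk ↦ by
    simp only [Z]
    rw [h₂ k (by omega), show m₂ + (k + (m₃ - m₂)) = m₃ + k by omega, h₃ k (by omega)]
  have hZ : PeriodicBelow Z (m₂ - m₁) m₃ := hZq.extend hZp (by omega) (by omega)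
  obtain ht₁ | ⟨k, rfl⟩ : t < m₁ ∨ ∃ k, t = m₁ + k := by
    rcases lt_or_ge t m₁ with h | h
    · exact .inl h
    · exact .inr ⟨t - m₁, by omega⟩
  · apply hπ
    rw [← h₂ _ (by omega), ← h₂ _ (by omega)]
    exact (hZ t (by omega)).symm
  · rw [show m₁ + k + (m₂ - m₁) = m₂ + k by omega, h₂ k (by omega), h₁ k (by omega)]

theorem Finset.card_le_two_of_not_exists_lt_lt [LinearOrder β] {s : Finset β}
    (h : ¬∃ a ∈ s, ∃ b ∈ s, ∃ c ∈ s, a < b ∧ b < c) : #s ≤ 2 := by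
  by_contra! hs
  let e := s.orderEmbOfFin rfl
  exact h ⟨e ⟨0, by omega⟩, s.orderEmbOfFin_mem rfl _, e ⟨1, hs.trans' one_lt_two⟩,
    s.orderEmbOfFin_mem rfl _, e ⟨2, hs⟩, s.orderEmbOfFin_mem rfl _,
    e.strictMono (Fin.mk_lt_mk.2 zero_lt_one), e.strictMono (Fin.mk_lt_mk.2 one_lt_two)⟩

theorem List.take_drop_eq_map_of_getElem? {w : List α} {i j l : ℕ} {f : α → α}
    (h : ∀ k < l, w[j + k]? = w[i + k]?.map f) :
    (w.drop j).take l = ((w.drop i).take l).map f := by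
  refine List.ext_getElem? fun k ↦ ?_
  simp only [List.getElem?_take, List.getElem?_drop, List.getElem?_map]
  split_ifs with hk
  · exact h k hk
  · rfl

theorem exists_perm_of_isParamSquare_take_drop [Finite α] {w : List α} {i l : ℕ}
    (hl : i + l ≤ w.length) (hs : IsParamSquare ((w.drop i).take l)) :
    ∃ (π : Equiv.Perm α) (m : ℕ), 0 < m ∧ l = 2 * m ∧
      ∀ k < m, w[i + (m + k)]? = w[i + k]?.map π := by
  obtain ⟨u, π, hu, hs⟩ := isParamSquare_iff.1 hs
  have hlen : l = 2 * u.length := by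
    have := congrArg List.length hs
    simp only [List.length_take, List.length_drop, List.length_append, List.length_map] at this
    omega
  refine ⟨π, u.length, List.length_pos_of_ne_nil hu, hlen, fun k hk ↦ ?_⟩
  have h₁ := congrArg (·[u.length + k]?) hs
  have h₂ := congrArg (·[k]?) hs
  simp only [List.getElem?_take, List.getElem?_drop] at h₁ h₂
  rw [if_pos (by omega)] at h₁ h₂
  rw [h₁, h₂, List.getElem?_append_right (by omega), List.getElem?_append_left hk,
    List.getElem?_map, Nat.add_sub_cancel_left]

theorem exists_lt_paramEquiv_of_three_squares {w : List α} {i m₁ m₂ m₃ : ℕ}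
    {π : Equiv.Perm α} (h₁₂ : m₁ < m₂) (h₂₃ : m₂ < m₃)
    (h₁ : ∀ k < m₁, w[i + (m₁ + k)]? = w[i + k]?.map π)
    (h₂ : ∀ k < m₂, w[i + (m₂ + k)]? = w[i + k]?.map π)
    (h₃ : ∀ k < m₃, w[i + (m₃ + k)]? = w[i + k]?.map π) :
    ∃ j > i, ParamEquiv ((w.drop i).take (2 * m₁)) ((w.drop j).take (2 * m₁)) := by
  by_cases h : 2 * m₁ ≤ m₃
  · refine ⟨i + m₃, by omega, ?_⟩
    rw [List.take_drop_eq_map_of_getElem? (i := i) (j := i + m₃) (f := π) fun k hk ↦ by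
      rw [add_assoc]; exact h₃ k (by omega)]
    exact .of_perm _ π
  · refine ⟨i + (m₂ - m₁), by omega, ?_⟩
    rw [List.take_drop_eq_map_of_getElem? (i := i) (j := i + (m₂ - m₁)) (f := id) fun k hk ↦ ?_,
      List.map_id]
    · exact .refl _
    · rw [Option.map_id, id, add_assoc, add_comm (m₂ - m₁)]
      exact shift_eq_of_three_squares (X := fun k ↦ w[i + k]?)
        (Option.map_injective π.injective) h₁₂ h₂₃ (by omega) h₁ h₂ h₃ k hk

def IsRightmostParamSquare (w : List α) (i l : ℕ) : Prop :=
  i + l ≤ w.length ∧ IsParamSquare ((w.drop i).take l) ∧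
    ∀ j > i, ¬ParamEquiv ((w.drop i).take l) ((w.drop j).take l)

open Classical in
noncomputable def rightmostParamSquares (w : List α) : Finset (ℕ × ℕ) :=
  {x ∈ range (w.length + 1) ×ˢ range (w.length + 1) | IsRightmostParamSquare w x.1 x.2}

theorem mem_rightmostParamSquares {w : List α} {x : ℕ × ℕ} :
    x ∈ rightmostParamSquares w ↔ IsRightmostParamSquare w x.1 x.2 := by
  simp only [rightmostParamSquares, mem_filter, mem_product, mem_range, and_iff_right_iff_imp]
  intro h
  have := h.1
  omega

theorem exists_rightmostParamSquare [Finite α] {w s : List α} (hsw : s <:+: w)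
    (hs : IsParamSquare s) :
    ∃ i, IsRightmostParamSquare w i s.length ∧ ParamEquiv s ((w.drop i).take s.length) := by
  classical
  let P j := ParamEquiv s ((w.drop j).take s.length)
  have hbound {j : ℕ} (hj : P j) : j + s.length ≤ w.length := by
    have hlen := hj.length_eq
    have := hs.length_pos
    simp only [List.length_take, List.length_drop] at hlen
    omega
  obtain ⟨i₀, hi₀⟩ : ∃ i₀, P i₀ := by
    obtain ⟨a, b, rfl⟩ := hsw
    exact ⟨a.length, by simpa [P, List.append_assoc] using ParamEquiv.refl s⟩
  have hi : P (Nat.findGreatest P w.length) :=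
    Nat.findGreatest_spec (by have := hbound hi₀; omega) hi₀
  refine ⟨_, ⟨hbound hi, hs.of_paramEquiv hi, fun j hj hij ↦ ?_⟩, hi⟩
  exact Nat.findGreatest_is_greatest hj (by have := hbound (hi.trans hij); omega) (hi.trans hij)

theorem card_le_two_of_forall_isRightmostParamSquare {w : List α} {i : ℕ} {σ : Equiv.Perm α}
    {F : Finset ℕ} (hF : ∀ m ∈ F, IsRightmostParamSquare w i (2 * m) ∧
      ∀ k < m, w[i + (m + k)]? = w[i + k]?.map σ) : #F ≤ 2 := by
  refine card_le_two_of_not_exists_lt_lt ?_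
  rintro ⟨m₁, h₁, m₂, h₂, m₃, h₃, h₁₂, h₂₃⟩
  obtain ⟨j, hj, hpe⟩ :=
    exists_lt_paramEquiv_of_three_squares h₁₂ h₂₃ (hF m₁ h₁).2 (hF m₂ h₂).2 (hF m₃ h₃).2
  exact (hF m₁ h₁).1.2.2 j hj hpe

theorem card_rightmostParamSquares_le [Fintype α] (w : List α) :
    #(rightmostParamSquares w) ≤ 2 * (Fintype.card α).factorial * w.length := by
  classical
  have hdata : ∀ x ∈ rightmostParamSquares w, ∃ (π : Equiv.Perm α) (m : ℕ), 0 < m ∧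
      x.2 = 2 * m ∧ ∀ k < m, w[x.1 + (m + k)]? = w[x.1 + k]?.map π := fun x hx ↦ by
    obtain ⟨hl, hs, -⟩ := mem_rightmostParamSquares.1 hx
    exact exists_perm_of_isParamSquare_take_drop hl hs
  choose! π m hm hlen hsq using hdata
  have hmaps : ∀ x ∈ rightmostParamSquares w,
      (x.1, π x) ∈ range w.length ×ˢ (univ : Finset (Equiv.Perm α)) := fun x hx ↦ by
    have := (mem_rightmostParamSquares.1 hx).1
    have := hm x hx
    have := hlen x hx
    simp only [mem_product, mem_range, mem_univ, and_true]
    omega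
  have hfiber : ∀ b ∈ range w.length ×ˢ (univ : Finset (Equiv.Perm α)),
      #{x ∈ rightmostParamSquares w | (x.1, π x) = b} ≤ 2 := by
    rintro ⟨i, σ⟩ -
    set F : Finset (ℕ × ℕ) := {x ∈ rightmostParamSquares w | (x.1, π x) = (i, σ)}
    have hF {x} (hx : x ∈ F) : x ∈ rightmostParamSquares w ∧ x.1 = i ∧ π x = σ := by
      simpa [F, Prod.ext_iff] using hx
    have hinj : Set.InjOn m F := fun x hx y hy hxy ↦ by
      obtain ⟨hx, hxi, -⟩ := hF hx
      obtain ⟨hy, hyi, -⟩ := hF hy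
      exact Prod.ext (hxi.trans hyi.symm) (by rw [hlen x hx, hlen y hy, hxy])
    rw [← card_image_of_injOn hinj]
    refine card_le_two_of_forall_isRightmostParamSquare (w := w) (i := i) (σ := σ) fun _ hmF ↦ ?_
    obtain ⟨x, hx, rfl⟩ := mem_image.1 hmF
    obtain ⟨hx, hxi, hxσ⟩ := hF hx
    exact ⟨hxi ▸ hlen x hx ▸ mem_rightmostParamSquares.1 hx, hxi ▸ hxσ ▸ hsq x hx⟩
  calc #(rightmostParamSquares w)
      ≤ 2 * #(range w.length ×ˢ (univ : Finset (Equiv.Perm α))) :=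
        card_le_mul_card_image_of_maps_to hmaps 2 hfiber
    _ = 2 * (Fintype.card α).factorial * w.length := by
        rw [card_product, card_range, card_univ, Fintype.card_perm]; ring

theorem ncard_le_of_forall_paramEquiv [Fintype α] {A : Set (List α)} (S : Finset (List α))
    (hA : ∀ s ∈ A, ∃ t ∈ S, ParamEquiv s t) : A.ncard ≤ #S * (Fintype.card α).factorial := by
  classical
  let T := (S ×ˢ (univ : Finset (Equiv.Perm α))).image fun x ↦ x.1.map x.2
  have hAT : A ⊆ T := fun s hs ↦ by
    obtain ⟨t, ht, hst⟩ := hA s hs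
    obtain ⟨π, rfl⟩ := hst.exists_perm
    refine mem_coe.2 (mem_image.2 ⟨(s.map π, π.symm), by simpa using ht, ?_⟩)
    simp [List.map_map, comp_def]
  calc A.ncard ≤ (T : Set (List α)).ncard := Set.ncard_le_ncard hAT T.finite_toSet
    _ = #T := Set.ncard_coe_finset T
    _ ≤ #(S ×ˢ (univ : Finset (Equiv.Perm α))) := card_image_le
    _ = #S * (Fintype.card α).factorial := by rw [card_product, card_univ, Fintype.card_perm]

end

/-- Let `Σ` be an alphabet of size `σ` and `w ∈ Σ^n`.  Then the number of
parameterized-equivalence classes represented among the fragments of `w` that are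
parameterized squares is at most `2·σ!·n` (there is a set of at most `2·σ!·n` words such
that every parameterized-square fragment of `w` is parameterized-equivalent to one of
them), and the number of distinct words occurring as fragments of `w` that are
parameterized squares is at most `2·(σ!)²·n`. -/
theorem param_squares_bounds {α : Type*} [Fintype α] (w : List α) (n : ℕ)
    (hn : w.length = n) :
    (∃ S : Finset (List α), S.card ≤ 2 * (Fintype.card α).factorial * n ∧
      ∀ s : List α, s <:+: w → IsParamSquare s → ∃ t ∈ S, ParamEquiv s t) ∧
    {s : List α | s <:+: w ∧ IsParamSquare s}.ncard ≤
      2 * (Fintype.card α).factorial ^ 2 * n := by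
  classical
  subst hn
  let S := (rightmostParamSquares w).image fun x ↦ (w.drop x.1).take x.2
  have hS : #S ≤ 2 * (Fintype.card α).factorial * w.length :=
    card_image_le.trans (card_rightmostParamSquares_le w)
  have hcover : ∀ s, s <:+: w → IsParamSquare s → ∃ t ∈ S, ParamEquiv s t := by
    intro s hsw hs
    obtain ⟨i, hi, hst⟩ := exists_rightmostParamSquare hsw hs
    exact ⟨_, mem_image_of_mem _ ((mem_rightmostParamSquares (x := (i, s.length))).2 hi), hst⟩
  refine ⟨⟨S, hS, hcover⟩, ?_⟩
  calc _ ≤ #S * (Fintype.card α).factorial :=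
        ncard_le_of_forall_paramEquiv S fun s hs ↦ hcover s hs.1 hs.2
    _ ≤ 2 * (Fintype.card α).factorial * w.length * (Fintype.card α).factorial :=
        Nat.mul_le_mul_right _ hS
    _ = 2 * (Fintype.card α).factorial ^ 2 * w.length := by ring
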